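/- arXiv:math/0511422 — 2 statements merged into one kernel-verified Lean document; each statement's English description precedes it below -/
import Mathlib

section
/- Let G be an unlabeled tree. Let 𝒱₁ be the set of vertex-rooted versions of G whose root is not incident to a symmetry-edge, ℰ the set of edge-rooted versions of G, and 𝒮 the set of symmetry-edge-rooted versions of G. Then the cycle indices satisfy Z(G) = Z(𝒱₁) − Z(ℰ) + 2·Z(𝒮). -/
open MvPolynomial

/-- The cycle-index monomial `Π_k s_k^{j_k(α)}` of a permutation `α`. -/
noncomputable def permCycleMonomial {V : Type*} [Fintype V] [DecidableEq V]
    (α : Equiv.Perm V) : MvPolynomial ℕ ℚ :=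
  X 1 ^ (Fintype.card V - α.cycleType.sum) *
    (α.cycleType.map fun k => (X k : MvPolynomial ℕ ℚ)).prod

/-- The cycle index `Z(A) = (1/|A|) Σ_{α ∈ A} Π_k s_k^{j_k(α)}`. -/
noncomputable def cycleIndex {V : Type*} [Fintype V] [DecidableEq V]
    (A : Subgroup (Equiv.Perm V)) : MvPolynomial ℕ ℚ :=
  (Nat.card A : ℚ)⁻¹ • ∑ᶠ α ∈ (A : Set (Equiv.Perm V)), permCycleMonomial α

/-- The automorphism group of a graph, as a subgroup of the permutations of the
vertices. -/
def autGroup {V : Type*} (T : SimpleGraph V) : Subgroup (Equiv.Perm V) where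
  carrier := {φ | ∀ a b, T.Adj (φ a) (φ b) ↔ T.Adj a b}
  one_mem' := fun a b => Iff.rfl
  mul_mem' := fun hφ hψ a b => (hφ _ _).trans (hψ a b)
  inv_mem' := by
    intro φ hφ a b
    simpa using (hφ (φ⁻¹ a) (φ⁻¹ b)).symm

/-- The automorphisms of `T` fixing the vertex `v` (the automorphism group of
the graph rooted at `v`). -/
def rootStab {V : Type*} (T : SimpleGraph V) (v : V) : Subgroup (Equiv.Perm V) :=
  autGroup T ⊓ MulAction.stabilizer (Equiv.Perm V) v

/-- Permutations fixing the pair `{u, v}` setwise. -/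
def pairStabilizer {V : Type*} (u v : V) : Subgroup (Equiv.Perm V) where
  carrier := {φ | (φ u = u ∧ φ v = v) ∨ (φ u = v ∧ φ v = u)}
  one_mem' := Or.inl ⟨rfl, rfl⟩
  mul_mem' := by
    rintro a b (⟨h1, h2⟩ | ⟨h1, h2⟩) (⟨h3, h4⟩ | ⟨h3, h4⟩) <;>
      simp only [Set.mem_setOf_eq, Equiv.Perm.mul_apply, h1, h2, h3, h4] <;> tauto
  inv_mem' := by
    rintro a (⟨h1, h2⟩ | ⟨h1, h2⟩)
    · exact Or.inl ⟨(Equiv.symm_apply_eq a).2 h1.symm, (Equiv.symm_apply_eq a).2 h2.symm⟩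
    · exact Or.inr ⟨(Equiv.symm_apply_eq a).2 h2.symm, (Equiv.symm_apply_eq a).2 h1.symm⟩

/-- The automorphisms of `T` fixing the edge `{u, v}` setwise (the automorphism
group of the graph rooted at this edge). -/
def edgeStab {V : Type*} (T : SimpleGraph V) (u v : V) : Subgroup (Equiv.Perm V) :=
  autGroup T ⊓ pairStabilizer u v

/-- `{u, v}` is a symmetry-edge of `T`: an edge whose endpoints are
interchanged by some automorphism of `T`. -/
def IsSymmetryEdge {V : Type*} (T : SimpleGraph V) (u v : V) : Prop :=
  T.Adj u v ∧ ∃ φ ∈ autGroup T, φ u = v ∧ φ v = u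


section Aux

set_option linter.unusedSectionVars false

open SimpleGraph Finset

variable {V : Type} [Fintype V] [DecidableEq V] {T : SimpleGraph V}

lemma tree_path_length (hT : T.IsTree) {u v : V} (p : T.Walk u v) (hp : p.IsPath) :
    p.length = T.dist u v := by
  obtain ⟨q, hq, hql⟩ := hT.isConnected.exists_path_of_dist u v
  have := (hT.existsUnique_path u v).unique hp hq
  rw [this, hql]

lemma aut_dist {α : Equiv.Perm V} (hc : T.Connected) (hα : α ∈ autGroup T) (u v : V) :
    T.dist (α u) (α v) = T.dist u v := by
  have key : ∀ (β : Equiv.Perm V), β ∈ autGroup T → ∀ u v : V,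
      T.dist (β u) (β v) ≤ T.dist u v := by
    intro β hβ u v
    obtain ⟨p, hp, hl⟩ := hc.exists_path_of_dist u v
    let f : T →g T := ⟨β, fun h => (hβ _ _).2 h⟩
    calc T.dist (β u) (β v) ≤ (p.map f).length := SimpleGraph.dist_le _
      _ = p.length := SimpleGraph.Walk.length_map f p
      _ = T.dist u v := hl
  refine le_antisymm (key α hα u v) ?_
  have := key α⁻¹ (Subgroup.inv_mem _ hα) (α u) (α v)
  simpa using this

lemma isPath_concat {u v x : V} {p : T.Walk u v} (hp : p.IsPath) (h : T.Adj v x)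
    (hx : x ∉ p.support) : (p.concat h).IsPath := by
  rw [← SimpleGraph.Walk.isPath_reverse_iff, SimpleGraph.Walk.reverse_concat,
    SimpleGraph.Walk.cons_isPath_iff]
  exact ⟨hp.reverse, by simpa [SimpleGraph.Walk.support_reverse] using hx⟩

lemma tree_dist_split (hT : T.IsTree) {u v x : V} (p : T.Walk u v) (hp : p.IsPath)
    (hx : x ∈ p.support) : T.dist u v = T.dist u x + T.dist x v := by
  have h1 := tree_path_length hT _ (hp.takeUntil hx)
  have h2 := tree_path_length hT _ (hp.dropUntil hx)
  have h3 := congrArg SimpleGraph.Walk.length (p.take_spec hx)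
  rw [SimpleGraph.Walk.length_append] at h3
  have h4 := tree_path_length hT p hp
  omega

lemma tree_adj_dist (hT : T.IsTree) {u v : V} (huv : T.Adj u v) (w : V) :
    T.dist w v = T.dist w u + 1 ∨ T.dist w u = T.dist w v + 1 := by
  obtain ⟨p, hp, hl⟩ := hT.isConnected.exists_path_of_dist w u
  by_cases hv : v ∈ p.support
  · right
    have := tree_dist_split hT p hp hv
    rw [SimpleGraph.dist_eq_one_iff_adj.2 huv.symm] at this
    omega
  · left
    have hq := isPath_concat hp huv hv
    have := tree_path_length hT _ hq
    rw [SimpleGraph.Walk.length_concat] at this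
    omega

lemma tree_unique_closer (hT : T.IsTree) {v w u1 u2 : V} (h1 : T.Adj u1 v) (h2 : T.Adj u2 v)
    (d1 : T.dist w v = T.dist w u1 + 1) (d2 : T.dist w v = T.dist w u2 + 1) : u1 = u2 := by
  obtain ⟨q1, hq1, hl1⟩ := hT.isConnected.exists_path_of_dist w u1
  obtain ⟨q2, hq2, hl2⟩ := hT.isConnected.exists_path_of_dist w u2
  have hv1 : v ∉ q1.support := by
    intro hv
    have := tree_dist_split hT q1 hq1 hv
    rw [SimpleGraph.dist_eq_one_iff_adj.2 h1.symm] at this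
    omega
  have hv2 : v ∉ q2.support := by
    intro hv
    have := tree_dist_split hT q2 hq2 hv
    rw [SimpleGraph.dist_eq_one_iff_adj.2 h2.symm] at this
    omega
  have hp1 := isPath_concat hq1 h1 hv1
  have hp2 := isPath_concat hq2 h2 hv2
  have heq := (hT.existsUnique_path w v).unique hp1 hp2
  have g1 : (q1.concat h1).getVert q1.length = u1 := by
    rw [SimpleGraph.Walk.concat_eq_append, SimpleGraph.Walk.getVert_append]
    simp
  have g2 : (q2.concat h2).getVert q2.length = u2 := by
    rw [SimpleGraph.Walk.concat_eq_append, SimpleGraph.Walk.getVert_append]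
    simp
  have hll : q1.length = q2.length := by omega
  rw [← g1, ← g2, heq, hll]

lemma getVert_inj_of_isPath {u v : V} {p : T.Walk u v} (hp : p.IsPath) {i j : ℕ}
    (hi : i ≤ p.length) (hj : j ≤ p.length) (h : p.getVert i = p.getVert j) : i = j := by
  induction p generalizing i j with
  | nil => simp at hi hj; omega
  | cons ha q ih =>
    rw [SimpleGraph.Walk.cons_isPath_iff] at hp
    match i, j with
    | 0, 0 => rfl
    | 0, (m+1) =>
      exfalso
      rw [SimpleGraph.Walk.getVert_zero, SimpleGraph.Walk.getVert_cons_succ] at h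
      exact hp.2 (SimpleGraph.Walk.mem_support_iff_exists_getVert.2
        ⟨m, h.symm, by simpa using hj⟩)
    | (m+1), 0 =>
      exfalso
      rw [SimpleGraph.Walk.getVert_zero, SimpleGraph.Walk.getVert_cons_succ] at h
      exact hp.2 (SimpleGraph.Walk.mem_support_iff_exists_getVert.2
        ⟨m, h, by simpa using hi⟩)
    | (m+1), (k+1) =>
      rw [SimpleGraph.Walk.getVert_cons_succ, SimpleGraph.Walk.getVert_cons_succ] at h
      have := ih hp.1 (by simpa using hi) (by simpa using hj) h
      omega

open Finset in
lemma half_le (hT : T.IsTree) {u x : V}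
    (hu : ∀ y : V, (∑ w : V, T.dist w u) ≤ ∑ w : V, T.dist w y) (hux : T.Adj u x) :
    Fintype.card V ≤ 2 * (univ.filter (fun w => T.dist w u < T.dist w x)).card := by
  have dich : ∀ w, T.dist w x = T.dist w u + 1 ∨ T.dist w u = T.dist w x + 1 :=
    tree_adj_dist hT hux
  have key1 : ∀ w ∈ univ.filter (fun w => T.dist w u < T.dist w x), T.dist w x = T.dist w u + 1 := by
    intro w hw
    simp only [mem_filter] at hw
    rcases dich w with h | h
    · exact h
    · omega
  have key2 : ∀ w ∈ univ.filter (fun w => ¬ T.dist w u < T.dist w x), T.dist w u = T.dist w x + 1 := by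
    intro w hw
    simp only [mem_filter, not_lt] at hw
    rcases dich w with h | h
    · omega
    · exact h
  have e1 : ∑ w ∈ univ.filter (fun w => T.dist w u < T.dist w x), T.dist w x
      = (∑ w ∈ univ.filter (fun w => T.dist w u < T.dist w x), T.dist w u) + (univ.filter (fun w => T.dist w u < T.dist w x)).card := by
    rw [sum_congr rfl key1, sum_add_distrib, sum_const, smul_eq_mul, mul_one]
  have e2 : ∑ w ∈ univ.filter (fun w => ¬ T.dist w u < T.dist w x), T.dist w u
      = (∑ w ∈ univ.filter (fun w => ¬ T.dist w u < T.dist w x), T.dist w x)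
        + (univ.filter (fun w => ¬ T.dist w u < T.dist w x)).card := by
    rw [sum_congr rfl key2, sum_add_distrib, sum_const, smul_eq_mul, mul_one]
  have hsplit : ∀ y : V, (∑ w : V, T.dist w y)
      = ∑ w ∈ univ.filter (fun w => T.dist w u < T.dist w x), T.dist w y + ∑ w ∈ univ.filter (fun w => ¬ T.dist w u < T.dist w x), T.dist w y :=
    fun y => (sum_filter_add_sum_filter_not univ (fun w => T.dist w u < T.dist w x) _).symm
  have hmin := hu x
  rw [hsplit u, hsplit x, e1, e2] at hmin
  have hcards : (univ.filter (fun w => T.dist w u < T.dist w x)).card + (univ.filter (fun w => ¬ T.dist w u < T.dist w x)).card = Fintype.card V := by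
    rw [card_filter_add_card_filter_not, card_univ]
  omega

open Finset in
lemma min_adj (hT : T.IsTree) {u v : V}
    (hu : ∀ y : V, (∑ w : V, T.dist w u) ≤ ∑ w : V, T.dist w y)
    (hv : ∀ y : V, (∑ w : V, T.dist w v) ≤ ∑ w : V, T.dist w y)
    (huv : u ≠ v) : T.Adj u v := by
  classical
  obtain ⟨p, hp, hl⟩ := hT.isConnected.exists_path_of_dist u v
  have hk : 1 ≤ p.length := by
    have := hT.isConnected.pos_dist_of_ne huv
    omega
  by_cases hk1 : p.length = 1
  · have h01 : p.getVert 1 = v := by rw [← hk1]; exact p.getVert_length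
    have := p.adj_getVert_succ (i := 0) (by omega)
    rwa [SimpleGraph.Walk.getVert_zero, (by norm_num : (0:ℕ)+1 = 1), h01] at this
  exfalso
  have hk2 : 2 ≤ p.length := by omega
  set k := p.length with hkdef
  set S : ℕ → Finset V := fun i =>
    univ.filter (fun w => T.dist w (p.getVert i) < T.dist w (p.getVert (i+1))) with hS
  have hadj : ∀ i < k, T.Adj (p.getVert i) (p.getVert (i+1)) := fun i hi =>
    p.adj_getVert_succ hi
  have hchain : ∀ i, i + 2 ≤ k → S i ⊆ S (i+1) := by
    intro i hi w hw
    simp only [hS, mem_filter, mem_univ, true_and] at hw ⊢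
    have d1 : T.dist w (p.getVert (i+1)) = T.dist w (p.getVert i) + 1 := by
      rcases tree_adj_dist hT (hadj i (by omega)) w with h | h
      · exact h
      · omega
    rcases tree_adj_dist hT (hadj (i+1) (by omega)) w with h | h
    · omega
    · exfalso
      have := tree_unique_closer hT (hadj i (by omega)) (hadj (i+1) (by omega)).symm d1 h
      have := getVert_inj_of_isPath hp (i := i) (j := i+2) (by omega) (by omega) this
      omega
  have hchain' : ∀ i j, i ≤ j → j + 1 ≤ k → S i ⊆ S j := by
    intro i j hij hj
    induction j with
    | zero => simpa [Nat.le_zero.1 hij] using subset_rfl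
    | succ m ihm =>
      rcases Nat.lt_or_ge i (m+1) with h | h
      · exact (ihm (by omega) (by omega)).trans (hchain m (by omega))
      · have : i = m + 1 := by omega
        subst this; exact subset_rfl
  have hmem1 : p.getVert 1 ∈ S (k-1) := by
    have h1 : p.getVert 1 ∈ S 1 := by
      simp only [hS, mem_filter, mem_univ, true_and]
      have hne : p.getVert 1 ≠ p.getVert 2 := by
        intro h
        have := getVert_inj_of_isPath hp (i := 1) (j := 2) (by omega) (by omega) h
        omega
      have h2 := hT.isConnected.pos_dist_of_ne hne
      have h3 : T.dist (p.getVert 1) (p.getVert 1) = 0 := SimpleGraph.dist_self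
      have e12 : (1:ℕ)+1 = 2 := rfl
      rw [e12]
      omega
    exact hchain' 1 (k-1) (by omega) (by omega) h1
  have hnmem1 : p.getVert 1 ∉ S 0 := by
    simp only [hS, mem_filter, mem_univ, true_and, not_lt]
    have h3 : T.dist (p.getVert 1) (p.getVert (0+1)) = 0 := by
      norm_num [SimpleGraph.dist_self]
    have h4 : T.dist (p.getVert 1) (p.getVert 0) = 1 := by
      rw [SimpleGraph.Walk.getVert_zero, SimpleGraph.dist_eq_one_iff_adj]
      exact (by simpa [SimpleGraph.Walk.getVert_zero] using hadj 0 (by omega) :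
        T.Adj u (p.getVert (0+1))).symm
    omega
  have h0 : Fintype.card V ≤ 2 * (S 0).card := by
    have := half_le hT hu
      (by simpa [SimpleGraph.Walk.getVert_zero] using hadj 0 (by omega) :
        T.Adj u (p.getVert (0+1)))
    simpa [hS, SimpleGraph.Walk.getVert_zero] using this
  have hkk : k - 1 + 1 = k := by omega
  have hadjk1 : T.Adj (p.getVert (k-1)) (p.getVert k) := by
    have := hadj (k-1) (by omega); rwa [hkk] at this
  have hlast : Fintype.card V ≤ 2 * (univ.filter
      (fun w => T.dist w (p.getVert k) < T.dist w (p.getVert (k-1)))).card := by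
    have hvk : p.getVert k = v := p.getVert_length
    exact half_le hT (by rw [hvk]; exact hv) hadjk1.symm
  have hcomp : (S (k-1)).card + (univ.filter
      (fun w => T.dist w (p.getVert k) < T.dist w (p.getVert (k-1)))).card = Fintype.card V := by
    have hSk : S (k-1)
        = univ.filter (fun w => T.dist w (p.getVert (k-1)) < T.dist w (p.getVert k)) := by
      simp only [hS, hkk]
    rw [hSk]
    have heqf : (univ.filter (fun w => T.dist w (p.getVert k) < T.dist w (p.getVert (k-1))))
        = univ.filter (fun w => ¬ (T.dist w (p.getVert (k-1)) < T.dist w (p.getVert k))) := by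
      ext w
      have := tree_adj_dist hT hadjk1 w
      simp only [mem_filter, mem_univ, true_and, not_lt]
      omega
    rw [heqf, card_filter_add_card_filter_not, card_univ]
  have hcard : (S 0).card < (S (k-1)).card :=
    card_lt_card ((Finset.ssubset_iff_of_subset (hchain' 0 (k-1) (by omega) (by omega))).2
      ⟨p.getVert 1, hmem1, hnmem1⟩)
  omega

open Finset in
lemma exists_fixed_or_inverted (hT : T.IsTree) {α : Equiv.Perm V} (hα : α ∈ autGroup T) :
    (∃ v, α v = v) ∨ ∃ u v, T.Adj u v ∧ α u = v ∧ α v = u := by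
  classical
  have hne : Nonempty V := hT.isConnected.nonempty
  obtain ⟨u, -, hu0⟩ := Finset.exists_min_image univ (fun y => ∑ w : V, T.dist w y)
    ⟨Classical.arbitrary V, mem_univ _⟩
  have hu : ∀ y : V, (∑ w : V, T.dist w u) ≤ ∑ w : V, T.dist w y := fun y => hu0 y (mem_univ y)
  have Finv : ∀ y : V, (∑ w : V, T.dist w (α y)) = ∑ w : V, T.dist w y := by
    intro y
    calc (∑ w : V, T.dist w (α y)) = ∑ w : V, T.dist (α w) (α y) :=
        (Equiv.sum_comp α (fun w => T.dist w (α y))).symm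
      _ = ∑ w : V, T.dist w y := by
        refine Finset.sum_congr rfl fun w _ => ?_
        exact aut_dist hT.isConnected hα w y
  have hmin : ∀ z : V, (∑ w : V, T.dist w z) = (∑ w : V, T.dist w u) →
      ∀ y : V, (∑ w : V, T.dist w z) ≤ ∑ w : V, T.dist w y := by
    intro z hz y
    rw [hz]; exact hu y
  by_cases h1 : α u = u
  · exact Or.inl ⟨u, h1⟩
  have hminv : (∑ w : V, T.dist w (α u)) = (∑ w : V, T.dist w u) := Finv u
  have hadjuv : T.Adj u (α u) := min_adj hT hu (hmin _ hminv) (fun h => h1 h.symm)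
  by_cases h2 : α (α u) = α u
  · exact Or.inl ⟨α u, h2⟩
  by_cases h3 : α (α u) = u
  · exact Or.inr ⟨u, α u, hadjuv, rfl, h3⟩
  exfalso
  have hminw : (∑ w : V, T.dist w (α (α u))) = (∑ w : V, T.dist w u) := by
    rw [Finv, Finv]
  have hadjvw : T.Adj (α u) (α (α u)) :=
    min_adj hT (hmin _ hminv) (hmin _ hminw) (fun h => h2 h.symm)
  have hadjuw : T.Adj u (α (α u)) :=
    min_adj hT hu (hmin _ hminw) (fun h => h3 h.symm)
  have d1 : T.dist (α (α u)) u = 1 := SimpleGraph.dist_eq_one_iff_adj.2 hadjuw.symm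
  have d2 : T.dist (α (α u)) (α u) = 1 := SimpleGraph.dist_eq_one_iff_adj.2 hadjvw.symm
  rcases tree_adj_dist hT hadjuv (α (α u)) with h | h <;> omega

lemma not_fixed_inverted (hT : T.IsTree) {α : Equiv.Perm V} (hα : α ∈ autGroup T)
    {w u v : V} (hw : α w = w) (huv : T.Adj u v) (hu : α u = v) (hv : α v = u) : False := by
  have h := aut_dist hT.isConnected hα w u
  rw [hw, hu] at h
  rcases tree_adj_dist hT huv w with h' | h' <;> omega

lemma inverted_core (hT : T.IsTree) {α : Equiv.Perm V} (hα : α ∈ autGroup T)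
    {u v x y : V} (huv : T.Adj u v) (hu : α u = v) (hv : α v = u)
    (hxy : T.Adj x y) (hx : α x = y) (hy : α y = x)
    (hd : T.dist u y = T.dist u x + 1) : x = u ∧ y = v := by
  by_cases hyv : y = v
  · subst hyv
    exact ⟨hy.symm.trans hv, rfl⟩
  exfalso
  have hvx : T.dist v x = T.dist u x + 1 := by
    have h := aut_dist hT.isConnected hα u y
    rw [hu, hy] at h
    omega
  have hvy : T.dist v y = T.dist u x := by
    have h := aut_dist hT.isConnected hα u x
    rw [hu, hx] at h
    omega
  have hux : u ≠ x := by
    intro h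
    subst h
    exact hyv (hx.symm.trans hu)
  have ha : 1 ≤ T.dist u x := hT.isConnected.pos_dist_of_ne hux
  obtain ⟨q, hq, hql⟩ := hT.isConnected.exists_path_of_dist u x
  have hyq : y ∉ q.support := by
    intro hmem
    have := tree_dist_split hT q hq hmem
    rw [SimpleGraph.dist_eq_one_iff_adj.2 hxy.symm] at this
    omega
  have hvq : v ∉ q.support := by
    intro hmem
    have := tree_dist_split hT q hq hmem
    rw [SimpleGraph.dist_eq_one_iff_adj.2 huv] at this
    omega
  have hw1 : (SimpleGraph.Walk.cons huv.symm q).IsPath := by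
    rw [SimpleGraph.Walk.cons_isPath_iff]
    exact ⟨hq, hvq⟩
  obtain ⟨r, hr, hrl⟩ := hT.isConnected.exists_path_of_dist v y
  have hxr : x ∉ r.support := by
    intro hmem
    have := tree_dist_split hT r hr hmem
    rw [SimpleGraph.dist_eq_one_iff_adj.2 hxy] at this
    omega
  have hw2 : (r.concat hxy.symm).IsPath := isPath_concat hr hxy.symm hxr
  have heq := (hT.existsUnique_path v x).unique hw1 hw2
  have g2 : (r.concat hxy.symm).getVert r.length = y := by
    rw [SimpleGraph.Walk.concat_eq_append, SimpleGraph.Walk.getVert_append]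
    simp
  have g1 : (SimpleGraph.Walk.cons huv.symm q).getVert r.length = q.getVert (r.length - 1) := by
    apply SimpleGraph.Walk.getVert_cons
    omega
  have : y ∈ q.support := by
    rw [SimpleGraph.Walk.mem_support_iff_exists_getVert]
    exact ⟨r.length - 1, by rw [← g1, heq, g2], by omega⟩
  exact hyq this

lemma inverted_unique (hT : T.IsTree) {α : Equiv.Perm V} (hα : α ∈ autGroup T)
    {u v x y : V} (huv : T.Adj u v) (hu : α u = v) (hv : α v = u)
    (hxy : T.Adj x y) (hx : α x = y) (hy : α y = x) :
    (x = u ∧ y = v) ∨ (x = v ∧ y = u) := by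
  rcases tree_adj_dist hT hxy u with h | h
  · exact Or.inl (inverted_core hT hα huv hu hv hxy hx hy h)
  · have := inverted_core hT hα huv hu hv hxy.symm hy hx h
    exact Or.inr ⟨this.2, this.1⟩

open Finset in
lemma symEdge_half (hT : T.IsTree) {v w : V} (hs : IsSymmetryEdge T v w) :
    2 * (univ.filter (fun x => T.dist x w < T.dist x v)).card = Fintype.card V := by
  obtain ⟨hadj, φ, hφ, hφv, hφw⟩ := hs
  have hcard : (univ.filter (fun x => T.dist x w < T.dist x v)).card
      = (univ.filter (fun x => T.dist x v < T.dist x w)).card := by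
    apply Finset.card_bij (fun x _ => φ x)
    · intro x hx
      simp only [mem_filter, mem_univ, true_and] at hx ⊢
      have h1 : T.dist (φ x) (φ w) = T.dist x w := aut_dist hT.isConnected hφ x w
      have h2 : T.dist (φ x) (φ v) = T.dist x v := aut_dist hT.isConnected hφ x v
      rw [hφw] at h1
      rw [hφv] at h2
      omega
    · intro x1 _ x2 _ h
      exact φ.injective h
    · intro z hz
      simp only [mem_filter, mem_univ, true_and] at hz
      refine ⟨φ⁻¹ z, ?_, ?_⟩
      · simp only [mem_filter, mem_univ, true_and]
        have h1 : T.dist (φ (φ⁻¹ z)) (φ w) = T.dist (φ⁻¹ z) w :=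
          aut_dist hT.isConnected hφ _ w
        have h2 : T.dist (φ (φ⁻¹ z)) (φ v) = T.dist (φ⁻¹ z) v :=
          aut_dist hT.isConnected hφ _ v
        simp only [← Equiv.Perm.mul_apply, mul_inv_cancel, Equiv.Perm.one_apply, hφv, hφw] at h1 h2
        omega
      · simp
  have hsplit : (univ.filter (fun x => T.dist x w < T.dist x v)).card
      + (univ.filter (fun x => T.dist x v < T.dist x w)).card = Fintype.card V := by
    have heqf : (univ.filter (fun x => T.dist x v < T.dist x w))
        = univ.filter (fun x => ¬ T.dist x w < T.dist x v) := by
      ext x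
      have := tree_adj_dist hT hadj x
      simp only [mem_filter, mem_univ, true_and]
      omega
    rw [heqf, card_filter_add_card_filter_not, card_univ]
  omega

open Finset in
lemma symEdge_unique_at (hT : T.IsTree) {v w1 w2 : V} (h1 : IsSymmetryEdge T v w1)
    (h2 : IsSymmetryEdge T v w2) : w1 = w2 := by
  by_contra hne
  have hc1 := symEdge_half hT h1
  have hc2 := symEdge_half hT h2
  have hdisj : Disjoint (univ.filter (fun x => T.dist x w1 < T.dist x v))
      (univ.filter (fun x => T.dist x w2 < T.dist x v)) := by
    rw [Finset.disjoint_left]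
    intro x hx1 hx2
    simp only [mem_filter, mem_univ, true_and] at hx1 hx2
    have d1 : T.dist x v = T.dist x w1 + 1 := by
      rcases tree_adj_dist hT h1.1.symm x with h | h <;> omega
    have d2 : T.dist x v = T.dist x w2 + 1 := by
      rcases tree_adj_dist hT h2.1.symm x with h | h <;> omega
    exact hne (tree_unique_closer hT h1.1.symm h2.1.symm d1 d2)
  have hsub : (univ.filter (fun x => T.dist x w1 < T.dist x v))
      ∪ (univ.filter (fun x => T.dist x w2 < T.dist x v)) ⊆ univ.erase v := by
    intro x hx
    rcases Finset.mem_union.1 hx with hx | hx <;>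
    · simp only [mem_filter, mem_univ, true_and] at hx
      refine Finset.mem_erase.2 ⟨?_, mem_univ _⟩
      intro h
      subst h
      simp [SimpleGraph.dist_self] at hx
  have := Finset.card_le_card hsub
  rw [Finset.card_union_of_disjoint hdisj, Finset.card_erase_of_mem (mem_univ v),
    card_univ] at this
  have hpos : 0 < Fintype.card V := Fintype.card_pos_iff.2 hT.isConnected.nonempty
  omega

lemma fixed_symEdge (hT : T.IsTree) {α : Equiv.Perm V} (hα : α ∈ autGroup T)
    {v w : V} (hvfix : α v = v) (hs : IsSymmetryEdge T v w) : α w = w := by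
  obtain ⟨hadj, φ, hφ, hφv, hφw⟩ := hs
  have hinv : α⁻¹ v = v := by
    nth_rewrite 1 [← hvfix]
    exact α.symm_apply_apply v
  have hψ : (α * φ * α⁻¹ : Equiv.Perm V) ∈ autGroup T :=
    Subgroup.mul_mem _ (Subgroup.mul_mem _ hα hφ) (Subgroup.inv_mem _ hα)
  have hs' : IsSymmetryEdge T v (α w) := by
    refine ⟨?_, α * φ * α⁻¹, hψ, ?_, ?_⟩
    · have := (hα v w).2 hadj
      rwa [hvfix] at this
    · simp only [Equiv.Perm.mul_apply, hinv, hφv]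
    · simp only [Equiv.Perm.mul_apply]
      rw [show α⁻¹ (α w) = w from α.symm_apply_apply w, hφw, hvfix]
  exact symEdge_unique_at hT hs' ⟨hadj, φ, hφ, hφv, hφw⟩

attribute [local instance 10] Classical.propDecidable

open Finset in
lemma key_count (hT : T.IsTree) {α : Equiv.Perm V} (hα : α ∈ autGroup T) :
    2 * (univ.filter (fun v : V => (¬ ∃ w, IsSymmetryEdge T v w) ∧ α v = v)).card
    + 2 * (univ.filter (fun p : V × V => IsSymmetryEdge T p.1 p.2 ∧
        ((α p.1 = p.1 ∧ α p.2 = p.2) ∨ (α p.1 = p.2 ∧ α p.2 = p.1)))).card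
    = (univ.filter (fun p : V × V => T.Adj p.1 p.2 ∧
        ((α p.1 = p.1 ∧ α p.2 = p.2) ∨ (α p.1 = p.2 ∧ α p.2 = p.1)))).card + 2 := by
  by_cases hfix : ∃ r, α r = r
  · obtain ⟨r, hr⟩ := hfix
    have noinv : ∀ x y : V, T.Adj x y → α x = y → α y = x → False := fun x y h hx hy =>
      not_fixed_inverted hT hα hr h hx hy
    set f := (univ.filter (fun v : V => α v = v)) with hf
    have hiii : (univ.filter (fun v : V => (¬ ∃ w, IsSymmetryEdge T v w) ∧ α v = v)).card
        + (univ.filter (fun v : V => (∃ w, IsSymmetryEdge T v w) ∧ α v = v)).card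
        = f.card := by
      have e1 : (univ.filter (fun v : V => (¬ ∃ w, IsSymmetryEdge T v w) ∧ α v = v))
          = f.filter (fun v => ¬ ∃ w, IsSymmetryEdge T v w) := by
        rw [hf, filter_filter]
        apply filter_congr
        intro v _
        simp [and_comm]
      have e2 : (univ.filter (fun v : V => (∃ w, IsSymmetryEdge T v w) ∧ α v = v))
          = f.filter (fun v => ∃ w, IsSymmetryEdge T v w) := by
        rw [hf, filter_filter]
        apply filter_congr
        intro v _
        simp [and_comm]
      rw [e1, e2, add_comm]
      exact card_filter_add_card_filter_not (fun v => ∃ w, IsSymmetryEdge T v w)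
    have hii : (univ.filter (fun p : V × V => IsSymmetryEdge T p.1 p.2 ∧
          ((α p.1 = p.1 ∧ α p.2 = p.2) ∨ (α p.1 = p.2 ∧ α p.2 = p.1)))).card
        = (univ.filter (fun v : V => (∃ w, IsSymmetryEdge T v w) ∧ α v = v)).card := by
      apply Finset.card_bij (fun p _ => p.1)
      · intro p hp
        simp only [mem_filter, mem_univ, true_and] at hp ⊢
        obtain ⟨hs, hor⟩ := hp
        rcases hor with ⟨h1, h2⟩ | ⟨h1, h2⟩
        · exact ⟨⟨p.2, hs⟩, h1⟩
        · exact absurd (noinv p.1 p.2 hs.1 h1 h2) (by simp)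
      · intro p hp q hq h
        simp only [mem_filter, mem_univ, true_and] at hp hq
        have hy : p.2 = q.2 := by
          apply symEdge_unique_at hT (h ▸ hp.1)
          exact hq.1
        exact Prod.ext h hy
      · intro v hv
        simp only [mem_filter, mem_univ, true_and] at hv
        obtain ⟨⟨w, hs⟩, hvf⟩ := hv
        refine ⟨(v, w), ?_, rfl⟩
        simp only [mem_filter, mem_univ, true_and]
        exact ⟨hs, Or.inl ⟨hvf, fixed_symEdge hT hα hvf hs⟩⟩
    have hrf : r ∈ f := by simp [hf, hr]
    have hi : (univ.filter (fun p : V × V => T.Adj p.1 p.2 ∧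
          ((α p.1 = p.1 ∧ α p.2 = p.2) ∨ (α p.1 = p.2 ∧ α p.2 = p.1)))).card + 2
        = 2 * f.card := by
      have e0 : (univ.filter (fun p : V × V => T.Adj p.1 p.2 ∧
          ((α p.1 = p.1 ∧ α p.2 = p.2) ∨ (α p.1 = p.2 ∧ α p.2 = p.1))))
          = univ.filter (fun p : V × V => T.Adj p.1 p.2 ∧ α p.1 = p.1 ∧ α p.2 = p.2) := by
        ext p
        simp only [mem_filter, mem_univ, true_and]
        constructor
        · rintro ⟨ha, ⟨h1, h2⟩ | ⟨h1, h2⟩⟩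
          · exact ⟨ha, h1, h2⟩
          · exact absurd (noinv p.1 p.2 ha h1 h2) (by simp)
        · rintro ⟨ha, h1, h2⟩
          exact ⟨ha, Or.inl ⟨h1, h2⟩⟩
      rw [e0]
      set Ea := univ.filter (fun p : V × V => (T.Adj p.1 p.2 ∧ α p.1 = p.1 ∧ α p.2 = p.2)
        ∧ T.dist r p.1 < T.dist r p.2) with hEa
      set Eb := univ.filter (fun p : V × V => (T.Adj p.1 p.2 ∧ α p.1 = p.1 ∧ α p.2 = p.2)
        ∧ T.dist r p.2 < T.dist r p.1) with hEb
      have hsplit : (univ.filter (fun p : V × V =>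
          T.Adj p.1 p.2 ∧ α p.1 = p.1 ∧ α p.2 = p.2)).card = Ea.card + Eb.card := by
        have h1 : Ea = (univ.filter (fun p : V × V =>
            T.Adj p.1 p.2 ∧ α p.1 = p.1 ∧ α p.2 = p.2)).filter
            (fun p => T.dist r p.1 < T.dist r p.2) := by
          rw [hEa, filter_filter]
        have h2 : Eb = (univ.filter (fun p : V × V =>
            T.Adj p.1 p.2 ∧ α p.1 = p.1 ∧ α p.2 = p.2)).filter
            (fun p => ¬ T.dist r p.1 < T.dist r p.2) := by
          rw [hEb, filter_filter]
          ext p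
          simp only [mem_filter, mem_univ, true_and]
          constructor
          · rintro ⟨hh, hd⟩
            exact ⟨hh, by omega⟩
          · rintro ⟨hh, hd⟩
            refine ⟨hh, ?_⟩
            rcases tree_adj_dist hT hh.1 r with h | h <;> omega
        rw [h1, h2, card_filter_add_card_filter_not]
      have hab : Ea.card = Eb.card := by
        apply Finset.card_bij (fun p _ => (p.2, p.1))
        · intro p hp
          simp only [hEa, hEb, mem_filter, mem_univ, true_and] at hp ⊢
          exact ⟨⟨hp.1.1.symm, hp.1.2.2, hp.1.2.1⟩, hp.2⟩
        · intro p _ q _ h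
          exact Prod.ext (Prod.ext_iff.1 h).2 (Prod.ext_iff.1 h).1
        · intro p hp
          simp only [hEa, hEb, mem_filter, mem_univ, true_and] at hp
          refine ⟨(p.2, p.1), ?_, rfl⟩
          simp only [hEa, mem_filter, mem_univ, true_and]
          exact ⟨⟨hp.1.1.symm, hp.1.2.2, hp.1.2.1⟩, hp.2⟩
      have hEaf : Ea.card = (f.erase r).card := by
        apply Finset.card_bij (fun p _ => p.2)
        · intro p hp
          simp only [hEa, mem_filter, mem_univ, true_and] at hp
          refine Finset.mem_erase.2 ⟨?_, by simp [hf, hp.1.2.2]⟩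
          intro h
          rw [h, SimpleGraph.dist_self] at hp
          omega
        · intro p hp q hq h
          simp only [hEa, mem_filter, mem_univ, true_and] at hp hq
          have d1 : T.dist r p.2 = T.dist r p.1 + 1 := by
            rcases tree_adj_dist hT hp.1.1 r with hh | hh <;> omega
          have d2 : T.dist r q.2 = T.dist r q.1 + 1 := by
            rcases tree_adj_dist hT hq.1.1 r with hh | hh <;> omega
          have hadj2 : T.Adj q.1 p.2 := by rw [h]; exact hq.1.1
          have d2' : T.dist r p.2 = T.dist r q.1 + 1 := by rw [h]; exact d2
          exact Prod.ext (tree_unique_closer hT hp.1.1 hadj2 d1 d2') h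
        · intro y hy
          obtain ⟨hyr, hyf⟩ := Finset.mem_erase.1 hy
          simp only [hf, mem_filter, mem_univ, true_and] at hyf
          obtain ⟨p, hp, hl⟩ := hT.isConnected.exists_path_of_dist r y
          have hL : 1 ≤ p.length := by
            have h1 := hT.isConnected.pos_dist_of_ne (Ne.symm hyr)
            omega
          have hk : p.length - 1 + 1 = p.length := by omega
          have hadjxy : T.Adj (p.getVert (p.length - 1)) y := by
            have h2 := p.adj_getVert_succ (i := p.length - 1) (by omega)
            rw [hk] at h2
            rwa [p.getVert_length] at h2
          have hxmem : p.getVert (p.length - 1) ∈ p.support :=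
            SimpleGraph.Walk.mem_support_iff_exists_getVert.2 ⟨p.length - 1, rfl, by omega⟩
          have hdx_le : T.dist r (p.getVert (p.length - 1)) ≤ p.length :=
            le_trans (SimpleGraph.dist_le (p.takeUntil _ hxmem))
              (SimpleGraph.Walk.length_takeUntil_le p hxmem)
          have hdy : T.dist r y = T.dist r (p.getVert (p.length - 1)) + 1 := by
            rcases tree_adj_dist hT hadjxy r with hh | hh
            · exact hh
            · omega
          have hαx : α (p.getVert (p.length - 1)) = p.getVert (p.length - 1) := by
            have hadj2 : T.Adj (α (p.getVert (p.length - 1))) y := by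
              have h3 := (hα (p.getVert (p.length - 1)) y).2 hadjxy
              rwa [hyf] at h3
            have hdax : T.dist r (α (p.getVert (p.length - 1)))
                = T.dist r (p.getVert (p.length - 1)) := by
              have h4 := aut_dist hT.isConnected hα r (p.getVert (p.length - 1))
              rwa [hr] at h4
            exact tree_unique_closer hT hadj2 hadjxy (by omega) hdy
          refine ⟨(p.getVert (p.length - 1), y), ?_, rfl⟩
          simp only [hEa, mem_filter, mem_univ, true_and]
          exact ⟨⟨hadjxy, hαx, hyf⟩, by omega⟩
      have hfpos : 1 ≤ f.card := Finset.card_pos.2 ⟨r, hrf⟩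
      have herase : (f.erase r).card = f.card - 1 := Finset.card_erase_of_mem hrf
      omega
    omega
  · push_neg at hfix
    obtain h | hinv := exists_fixed_or_inverted hT hα
    · obtain ⟨z, hz⟩ := h
      exact absurd hz (hfix z)
    obtain ⟨u, v, huv, hu, hv⟩ := hinv
    have hne : u ≠ v := huv.ne
    have e1 : (univ.filter (fun v : V => (¬ ∃ w, IsSymmetryEdge T v w) ∧ α v = v)).card
        = 0 := by
      rw [Finset.card_eq_zero]
      ext z
      simp only [mem_filter, mem_univ, true_and, Finset.notMem_empty, iff_false, not_and]
      intro _
      exact hfix z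
    have e2 : (univ.filter (fun p : V × V => T.Adj p.1 p.2 ∧
        ((α p.1 = p.1 ∧ α p.2 = p.2) ∨ (α p.1 = p.2 ∧ α p.2 = p.1))))
        = {((u,v) : V × V), ((v,u) : V × V)} := by
      ext p
      simp only [mem_filter, mem_univ, true_and, mem_insert, mem_singleton]
      constructor
      · rintro ⟨ha, ⟨h1, h2⟩ | ⟨h1, h2⟩⟩
        · exact absurd h1 (hfix p.1)
        · rcases inverted_unique hT hα huv hu hv ha h1 h2 with ⟨hh1, hh2⟩ | ⟨hh1, hh2⟩
          · exact Or.inl (Prod.ext hh1 hh2)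
          · exact Or.inr (Prod.ext hh1 hh2)
      · rintro (h | h) <;> subst h
        · exact ⟨huv, Or.inr ⟨hu, hv⟩⟩
        · exact ⟨huv.symm, Or.inr ⟨hv, hu⟩⟩
    have e3 : (univ.filter (fun p : V × V => IsSymmetryEdge T p.1 p.2 ∧
        ((α p.1 = p.1 ∧ α p.2 = p.2) ∨ (α p.1 = p.2 ∧ α p.2 = p.1))))
        = {((u,v) : V × V), ((v,u) : V × V)} := by
      ext p
      simp only [mem_filter, mem_univ, true_and, mem_insert, mem_singleton]
      constructor
      · rintro ⟨ha, ⟨h1, h2⟩ | ⟨h1, h2⟩⟩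
        · exact absurd h1 (hfix p.1)
        · rcases inverted_unique hT hα huv hu hv ha.1 h1 h2 with ⟨hh1, hh2⟩ | ⟨hh1, hh2⟩
          · exact Or.inl (Prod.ext hh1 hh2)
          · exact Or.inr (Prod.ext hh1 hh2)
      · rintro (h | h) <;> subst h
        · exact ⟨⟨huv, α, hα, hu, hv⟩, Or.inr ⟨hu, hv⟩⟩
        · exact ⟨⟨huv.symm, α, hα, hv, hu⟩, Or.inr ⟨hv, hu⟩⟩
    have hcard2 : ({((u,v) : V × V), ((v,u) : V × V)} : Finset (V × V)).card = 2 := by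
      rw [Finset.card_insert_of_notMem, Finset.card_singleton]
      simp only [Finset.mem_singleton, Prod.ext_iff]
      rintro ⟨h1, -⟩
      exact hne h1
    rw [e1, e2, e3, hcard2]

lemma mem_rootStab_iff {β : Equiv.Perm V} {v : V} :
    β ∈ rootStab T v ↔ β ∈ autGroup T ∧ β v = v := by
  rw [rootStab, Subgroup.mem_inf, MulAction.mem_stabilizer_iff]
  simp [Equiv.Perm.smul_def]

lemma mem_edgeStab_iff {β : Equiv.Perm V} {u v : V} :
    β ∈ edgeStab T u v ↔ β ∈ autGroup T ∧ ((β u = u ∧ β v = v) ∨ (β u = v ∧ β v = u)) := by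
  rw [edgeStab, Subgroup.mem_inf]
  rfl

open Finset in
lemma cycleIndex_eq_sum (H : Subgroup (Equiv.Perm V)) :
    cycleIndex H
      = (Nat.card H : ℚ)⁻¹ • ∑ β ∈ univ.filter (· ∈ H), permCycleMonomial β := by
  rw [cycleIndex]
  congr 1
  rw [← finsum_mem_coe_finset]
  congr 1
  ext β
  simp

open Finset in
lemma rooted_term (H A : Subgroup (Equiv.Perm V)) (hH : (Nat.card H : ℚ) ≠ 0) :
    ((Nat.card H : ℚ) / (Nat.card A : ℚ)) • cycleIndex H
      = (Nat.card A : ℚ)⁻¹ • ∑ β ∈ univ.filter (· ∈ H), permCycleMonomial β := by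
  rw [cycleIndex_eq_sum, smul_smul]
  congr 1
  field_simp

open Finset in
lemma double_sum_eq {ι : Type*} [Fintype ι] [DecidableEq ι] (s : Finset ι)
    (P : ι → Equiv.Perm V → Prop) [∀ i β, Decidable (P i β)]
    (g : Equiv.Perm V → MvPolynomial ℕ ℚ) :
    (∑ i ∈ s, ∑ β ∈ univ.filter (fun β => P i β), g β)
      = ∑ β : Equiv.Perm V, ((s.filter (fun i => P i β)).card : ℚ) • g β := by
  have h1 : ∀ i, (∑ β ∈ univ.filter (fun β => P i β), g β)
      = ∑ β : Equiv.Perm V, if P i β then g β else 0 := fun i => Finset.sum_filter _ _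
  simp only [h1]
  rw [Finset.sum_comm]
  refine Finset.sum_congr rfl fun β _ => ?_
  rw [← Finset.sum_filter, Finset.sum_const, Nat.cast_smul_eq_nsmul]

end Aux

/-- Cycle-index version of the dissimilarity characteristic theorem for trees:
`Z(G) = Z(𝒱₁) − Z(ℰ) + 2 Z(𝒮)`, where `𝒱₁` are the vertex-rooted versions of
the tree whose root is not incident to a symmetry-edge, `ℰ` the edge-rooted
versions and `𝒮` the symmetry-edge-rooted versions.  The sum of cycle indices
over rooted versions (i.e. root orbits) is expressed by weighting the root
stabilizer's cycle index at each possible root `r` by `|Stab(r)|/|Aut|`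
(`= 1/|orbit of r|`); edges are counted as ordered pairs, whence the factors
`1/2`. -/
theorem tree_dissimilarity_cycle_index {V : Type} [Fintype V] [DecidableEq V]
    (T : SimpleGraph V) (hT : T.IsTree) :
    cycleIndex (autGroup T) =
      (∑ᶠ v ∈ {v : V | ¬ ∃ w, IsSymmetryEdge T v w},
        ((Nat.card (rootStab T v) : ℚ) / (Nat.card (autGroup T) : ℚ)) •
          cycleIndex (rootStab T v))
      - (1 / 2 : ℚ) • (∑ᶠ p ∈ {p : V × V | T.Adj p.1 p.2},
          ((Nat.card (edgeStab T p.1 p.2) : ℚ) / (Nat.card (autGroup T) : ℚ)) •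
            cycleIndex (edgeStab T p.1 p.2))
      + (2 : ℚ) • ((1 / 2 : ℚ) • ∑ᶠ p ∈ {p : V × V | IsSymmetryEdge T p.1 p.2},
          ((Nat.card (edgeStab T p.1 p.2) : ℚ) / (Nat.card (autGroup T) : ℚ)) •
            cycleIndex (edgeStab T p.1 p.2)) := by
  classical
  have hpos : ∀ H : Subgroup (Equiv.Perm V), (Nat.card H : ℚ) ≠ 0 := by
    intro H
    have h := Nat.card_pos (α := H)
    exact_mod_cast h.ne'
  have hset1 : {v : V | ¬ ∃ w, IsSymmetryEdge T v w}
      = ↑(Finset.univ.filter (fun v : V => ¬ ∃ w, IsSymmetryEdge T v w)) := by ext v; simp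
  have hset2 : {p : V × V | T.Adj p.1 p.2}
      = ↑(Finset.univ.filter (fun p : V × V => T.Adj p.1 p.2)) := by ext p; simp
  have hset3 : {p : V × V | IsSymmetryEdge T p.1 p.2}
      = ↑(Finset.univ.filter (fun p : V × V => IsSymmetryEdge T p.1 p.2)) := by ext p; simp
  rw [hset1, hset2, hset3, finsum_mem_coe_finset, finsum_mem_coe_finset, finsum_mem_coe_finset]
  rw [Finset.sum_congr rfl (fun v _ => rooted_term (rootStab T v) (autGroup T) (hpos _)),
    Finset.sum_congr rfl (fun (p : V × V) _ =>
      rooted_term (edgeStab T p.1 p.2) (autGroup T) (hpos _)),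
    Finset.sum_congr rfl (fun (p : V × V) _ =>
      rooted_term (edgeStab T p.1 p.2) (autGroup T) (hpos _)),
    ← Finset.smul_sum, ← Finset.smul_sum, ← Finset.smul_sum]
  rw [double_sum_eq _ (fun v β => β ∈ rootStab T v),
    double_sum_eq _ (fun (p : V × V) β => β ∈ edgeStab T p.1 p.2),
    double_sum_eq _ (fun (p : V × V) β => β ∈ edgeStab T p.1 p.2)]
  rw [cycleIndex_eq_sum (autGroup T)]
  have KEY : (∑ β ∈ Finset.univ.filter (· ∈ autGroup T), permCycleMonomial β)
      = (∑ β : Equiv.Perm V,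
          ((((Finset.univ.filter (fun v : V => ¬ ∃ w, IsSymmetryEdge T v w)).filter
            (fun v => β ∈ rootStab T v)).card : ℚ) • permCycleMonomial β))
        - (1/2 : ℚ) • (∑ β : Equiv.Perm V,
          ((((Finset.univ.filter (fun p : V × V => T.Adj p.1 p.2)).filter
            (fun p => β ∈ edgeStab T p.1 p.2)).card : ℚ) • permCycleMonomial β))
        + (∑ β : Equiv.Perm V,
          ((((Finset.univ.filter (fun p : V × V => IsSymmetryEdge T p.1 p.2)).filter
            (fun p => β ∈ edgeStab T p.1 p.2)).card : ℚ) • permCycleMonomial β)) := by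
    rw [Finset.smul_sum, ← Finset.sum_sub_distrib, ← Finset.sum_add_distrib,
      Finset.sum_filter]
    refine Finset.sum_congr rfl fun β _ => ?_
    rw [smul_smul, ← sub_smul, ← add_smul]
    by_cases hβ : β ∈ autGroup T
    · rw [if_pos hβ]
      have hc1 : ((Finset.univ.filter (fun v : V => ¬ ∃ w, IsSymmetryEdge T v w)).filter
          (fun v => β ∈ rootStab T v))
          = Finset.univ.filter (fun v : V => (¬ ∃ w, IsSymmetryEdge T v w) ∧ β v = v) := by
        rw [Finset.filter_filter]
        apply Finset.filter_congr
        intro v _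
        simp [mem_rootStab_iff, hβ]
      have hc2 : ((Finset.univ.filter (fun p : V × V => T.Adj p.1 p.2)).filter
          (fun p => β ∈ edgeStab T p.1 p.2))
          = Finset.univ.filter (fun p : V × V => T.Adj p.1 p.2 ∧
            ((β p.1 = p.1 ∧ β p.2 = p.2) ∨ (β p.1 = p.2 ∧ β p.2 = p.1))) := by
        rw [Finset.filter_filter]
        apply Finset.filter_congr
        intro p _
        simp [mem_edgeStab_iff, hβ]
      have hc3 : ((Finset.univ.filter (fun p : V × V => IsSymmetryEdge T p.1 p.2)).filter
          (fun p => β ∈ edgeStab T p.1 p.2))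
          = Finset.univ.filter (fun p : V × V => IsSymmetryEdge T p.1 p.2 ∧
            ((β p.1 = p.1 ∧ β p.2 = p.2) ∨ (β p.1 = p.2 ∧ β p.2 = p.1))) := by
        rw [Finset.filter_filter]
        apply Finset.filter_congr
        intro p _
        simp [mem_edgeStab_iff, hβ]
      rw [hc1, hc2, hc3]
      have hk := key_count hT hβ
      have hco : ((Finset.univ.filter (fun v : V =>
            (¬ ∃ w, IsSymmetryEdge T v w) ∧ β v = v)).card : ℚ)
          - 1/2 * ((Finset.univ.filter (fun p : V × V => T.Adj p.1 p.2 ∧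
            ((β p.1 = p.1 ∧ β p.2 = p.2) ∨ (β p.1 = p.2 ∧ β p.2 = p.1)))).card : ℚ)
          + ((Finset.univ.filter (fun p : V × V => IsSymmetryEdge T p.1 p.2 ∧
            ((β p.1 = p.1 ∧ β p.2 = p.2) ∨ (β p.1 = p.2 ∧ β p.2 = p.1)))).card : ℚ)
          = 1 := by
        have hkq : 2 * ((Finset.univ.filter (fun v : V =>
              (¬ ∃ w, IsSymmetryEdge T v w) ∧ β v = v)).card : ℚ)
            + 2 * ((Finset.univ.filter (fun p : V × V => IsSymmetryEdge T p.1 p.2 ∧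
              ((β p.1 = p.1 ∧ β p.2 = p.2) ∨ (β p.1 = p.2 ∧ β p.2 = p.1)))).card : ℚ)
            = ((Finset.univ.filter (fun p : V × V => T.Adj p.1 p.2 ∧
              ((β p.1 = p.1 ∧ β p.2 = p.2) ∨ (β p.1 = p.2 ∧ β p.2 = p.1)))).card : ℚ) + 2 := by
          exact_mod_cast hk
        linarith
      rw [hco, one_smul]
    · rw [if_neg hβ]
      have hz1 : ((Finset.univ.filter (fun v : V => ¬ ∃ w, IsSymmetryEdge T v w)).filter
          (fun v => β ∈ rootStab T v)) = ∅ :=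
        Finset.filter_eq_empty_iff.2 fun v _ h => hβ (mem_rootStab_iff.1 h).1
      have hz2 : ((Finset.univ.filter (fun p : V × V => T.Adj p.1 p.2)).filter
          (fun p => β ∈ edgeStab T p.1 p.2)) = ∅ :=
        Finset.filter_eq_empty_iff.2 fun p _ h => hβ (mem_edgeStab_iff.1 h).1
      have hz3 : ((Finset.univ.filter (fun p : V × V => IsSymmetryEdge T p.1 p.2)).filter
          (fun p => β ∈ edgeStab T p.1 p.2)) = ∅ :=
        Finset.filter_eq_empty_iff.2 fun p _ h => hβ (mem_edgeStab_iff.1 h).1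
      rw [hz1, hz2, hz3]
      norm_num
  rw [KEY]
  module
end

section
/- Let Y(x) be a power series with nonnegative coefficients, radius of convergence ρ ∈ (0,1), and Y(x) → τ as x → ρ⁻. Suppose Y satisfies Y(x) = x·exp(Ψ(Y(x)) + A(x)) for 0 < x < ρ, where Ψ(y) = (1/8)(1 + y − √(1 − 6y + y²)) and A(x) is analytic on |x| < ρ' for some ρ' > ρ with nonnegative coefficients. Then τ < 3 − 2√2. -/
open Filter

private lemma sqrt2_sq : Real.sqrt 2 ^ 2 = 2 := Real.sq_sqrt (by norm_num)

private lemma sqrt2_lb : (1.4142135 : ℝ) < Real.sqrt 2 := by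
  nlinarith [sqrt2_sq, Real.sqrt_nonneg 2]

private lemma sqrt2_ub : Real.sqrt 2 < 1.4142136 := by
  nlinarith [sqrt2_sq, Real.sqrt_nonneg 2]

set_option maxHeartbeats 1000000 in
private lemma numeric_contra (u v : ℝ)
    (hu : u = 3 - 2 * Real.sqrt 2 - 1/2000) (hv : v = 3 - 2 * Real.sqrt 2 - 1/4000)
    (h : (1 + v - Real.sqrt (1 - 6 * v + v ^ 2)) / 8
          - (1 + u - Real.sqrt (1 - 6 * u + u ^ 2)) / 8
        ≤ Real.log v - Real.log u) : False := by
  have hs2 := sqrt2_sq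
  have hl := sqrt2_lb
  have hr := sqrt2_ub
  have hs0 := Real.sqrt_nonneg 2
  have hu0 : 0 < u := by rw [hu]; linarith
  have hv0 : 0 < v := by rw [hv]; linarith
  have hqu : 1 - 6 * u + u ^ 2 = 4 * Real.sqrt 2 * (1/2000) + (1/2000) ^ 2 := by
    rw [hu]; linear_combination 4 * hs2
  have hqv : 1 - 6 * v + v ^ 2 = 4 * Real.sqrt 2 * (1/4000) + (1/4000) ^ 2 := by
    rw [hv]; linear_combination 4 * hs2
  have hqu0 : 0 ≤ 1 - 6 * u + u ^ 2 := by rw [hqu]; positivity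
  have hqv0 : 0 ≤ 1 - 6 * v + v ^ 2 := by rw [hqv]; positivity
  set A := Real.sqrt (1 - 6 * u + u ^ 2) with hA
  set B := Real.sqrt (1 - 6 * v + v ^ 2) with hB
  clear_value A B
  have hA0 : 0 ≤ A := hA ▸ Real.sqrt_nonneg _
  have hB0 : 0 ≤ B := hB ▸ Real.sqrt_nonneg _
  have hA2 : A ^ 2 = 1 - 6 * u + u ^ 2 := hA ▸ Real.sq_sqrt hqu0
  have hB2 : B ^ 2 = 1 - 6 * v + v ^ 2 := hB ▸ Real.sq_sqrt hqv0
  have hAub : A ≤ 0.0532 := by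
    rw [hA]
    calc Real.sqrt (1 - 6 * u + u ^ 2) ≤ Real.sqrt (0.0532 ^ 2) := by
          apply Real.sqrt_le_sqrt
          rw [hqu]; nlinarith
      _ = 0.0532 := Real.sqrt_sq (by norm_num)
  have hBub : B ≤ 0.0377 := by
    rw [hB]
    calc Real.sqrt (1 - 6 * v + v ^ 2) ≤ Real.sqrt (0.0377 ^ 2) := by
          apply Real.sqrt_le_sqrt
          rw [hqv]; nlinarith
      _ = 0.0377 := Real.sqrt_sq (by norm_num)
  have hqge : 0.00141421 ≤ (1 - 6 * u + u ^ 2) - (1 - 6 * v + v ^ 2) := by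
    rw [hqu, hqv]; nlinarith
  have hBA : B ≤ A := by
    rw [hA, hB]
    exact Real.sqrt_le_sqrt (by nlinarith)
  have hprod : (A - B) * (A + B) = (1 - 6 * u + u ^ 2) - (1 - 6 * v + v ^ 2) := by
    linear_combination hA2 - hB2
  have h0 : 0.00141421 ≤ (A - B) * (A + B) := by rw [hprod]; exact hqge
  have h1 : (A - B) * (A + B) ≤ (A - B) * 0.091 :=
    mul_le_mul_of_nonneg_left (by linarith) (by linarith)
  have hABlb : 0.0154 ≤ A - B := by linarith
  have hlog : Real.log v - Real.log u ≤ (v - u) / u := by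
    have h1 : Real.log (v / u) ≤ v / u - 1 := Real.log_le_sub_one_of_pos (by positivity)
    rw [Real.log_div (ne_of_gt hv0) (ne_of_gt hu0)] at h1
    have h2 : v / u - 1 = (v - u) / u := by field_simp
    linarith
  have hmain : (v - u + A - B) / 8 ≤ (v - u) / u := by linarith
  rw [div_le_div_iff₀ (by norm_num) hu0] at hmain
  have hvu : v - u = 1/4000 := by rw [hu, hv]; ring
  rw [hvu] at hmain
  have hulb : (0.171 : ℝ) ≤ u := by rw [hu]; linarith
  have hfin : (0.171 : ℝ) * 0.0154 ≤ u * (A - B) :=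
    mul_le_mul hulb hABlb (by norm_num) (by linarith)
  nlinarith [hfin, hmain, hu0, hulb]

private lemma tsum_mono_aux (c : ℕ → ℝ) (hc : ∀ n, 0 ≤ c n) {x1 x2 R : ℝ}
    (h0 : 0 ≤ x1) (h12 : x1 ≤ x2) (h2 : x2 < R)
    (hconv : ∀ x : ℝ, |x| < R → Summable fun n => c n * x ^ n) :
    (∑' n, c n * x1 ^ n) ≤ ∑' n, c n * x2 ^ n :=
  Summable.tsum_le_tsum
    (fun n => mul_le_mul_of_nonneg_left (pow_le_pow_left₀ h0 h12 n) (hc n))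
    (hconv x1 (by rw [abs_of_nonneg h0]; linarith))
    (hconv x2 (by rw [abs_of_nonneg (le_trans h0 h12)]; linarith))

private lemma tsum_cont_aux (c : ℕ → ℝ) {q R : ℝ} (hq : 0 ≤ q) (hqR : q < R)
    (hconv : ∀ x : ℝ, |x| < R → Summable fun n => c n * x ^ n) :
    ContinuousOn (fun x : ℝ => ∑' n, c n * x ^ n) (Set.Icc (-q) q) := by
  have hr0 : 0 ≤ (q + R) / 2 := by linarith
  refine continuousOn_tsum
    (fun n => (continuous_const.mul (continuous_pow n)).continuousOn)
    (((hconv ((q + R) / 2) (by rw [abs_of_nonneg hr0]; linarith)).abs)) ?_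
  intro n x hx
  have hxq : |x| ≤ q := abs_le.2 ⟨hx.1, hx.2⟩
  have : ‖c n * x ^ n‖ = |c n| * |x| ^ n := by
    rw [norm_mul, Real.norm_eq_abs, Real.norm_eq_abs, abs_pow]
  rw [this]
  calc |c n| * |x| ^ n ≤ |c n| * ((q + R) / 2) ^ n := by
        exact mul_le_mul_of_nonneg_left
          (pow_le_pow_left₀ (abs_nonneg x) (by linarith) n) (abs_nonneg _)
    _ ≤ |c n * ((q + R) / 2) ^ n| := by
        rw [abs_mul, abs_pow, abs_of_nonneg hr0]

/-- Let `Y(x) = Σ y_n x^n` have nonnegative coefficients, radius of convergence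
`ρ ∈ (0,1)`, and `Y(x) → τ` as `x → ρ⁻`. If `Y` satisfies
`Y(x) = x·exp(Ψ(Y(x)) + A(x))` on `(0,ρ)`, where
`Ψ(y) = (1/8)(1 + y − √(1 − 6y + y²))` and `A(x) = Σ a_n x^n` has nonnegative
coefficients and is analytic on a disk of radius `ρ' > ρ`, then `τ < 3 − 2√2`. -/
theorem singular_value_lt (y a : ℕ → ℝ) (ρ τ ρ' : ℝ)
    (hy : ∀ n, 0 ≤ y n) (ha : ∀ n, 0 ≤ a n)
    (hρ0 : 0 < ρ) (hρ1 : ρ < 1) (hρ' : ρ < ρ')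
    (hconv : ∀ x : ℝ, |x| < ρ → Summable fun n => y n * x ^ n)
    (hdiv : ∀ x : ℝ, ρ < x → ¬ Summable fun n => y n * x ^ n)
    (hA : ∀ x : ℝ, |x| < ρ' → Summable fun n => a n * x ^ n)
    (hτ : Tendsto (fun x : ℝ => ∑' n, y n * x ^ n) (nhdsWithin ρ (Set.Iio ρ)) (nhds τ))
    (heq : ∀ x : ℝ, 0 < x → x < ρ →
      (∑' n, y n * x ^ n) =
        x * Real.exp
          ((1 + (∑' n, y n * x ^ n)
              - Real.sqrt (1 - 6 * (∑' n, y n * x ^ n) + (∑' n, y n * x ^ n) ^ 2)) / 8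
            + ∑' n, a n * x ^ n)) :
    τ < 3 - 2 * Real.sqrt 2 := by
  by_contra hcon
  push_neg at hcon
  -- hcon : 3 - 2 * √2 ≤ τ
  have hs2 := sqrt2_sq
  have hsl := sqrt2_lb
  have hsr := sqrt2_ub
  set u₀ : ℝ := 3 - 2 * Real.sqrt 2 - 1/2000 with hu₀
  set v₀ : ℝ := 3 - 2 * Real.sqrt 2 - 1/4000 with hv₀
  clear_value u₀ v₀
  have hu₀pos : 0 < u₀ := by rw [hu₀]; nlinarith
  have huv₀ : u₀ < v₀ := by rw [hu₀, hv₀]; norm_num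
  have hv₀τ : v₀ < τ := by rw [hv₀]; nlinarith
  -- monotonicity of S and A
  have hSmono : ∀ x1 x2 : ℝ, 0 ≤ x1 → x1 ≤ x2 → x2 < ρ →
      (∑' n, y n * x1 ^ n) ≤ ∑' n, y n * x2 ^ n :=
    fun x1 x2 h0 h12 h2 => tsum_mono_aux y hy h0 h12 h2 hconv
  have hAmono : ∀ x1 x2 : ℝ, 0 ≤ x1 → x1 ≤ x2 → x2 < ρ →
      (∑' n, a n * x1 ^ n) ≤ ∑' n, a n * x2 ^ n :=
    fun x1 x2 h0 h12 h2 => tsum_mono_aux a ha h0 h12 (lt_trans h2 hρ') hA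
  -- S x ≤ τ on [0, ρ)
  have hSle : ∀ x : ℝ, 0 ≤ x → x < ρ → (∑' n, y n * x ^ n) ≤ τ := by
    intro x hx0 hxρ
    refine ge_of_tendsto hτ ?_
    filter_upwards [Ioo_mem_nhdsLT_of_mem (⟨hxρ, le_refl ρ⟩ : ρ ∈ Set.Ioc x ρ)] with t ht
    exact hSmono x t hx0 ht.1.le ht.2
  -- positivity of S on (0, ρ)
  have hSpos : ∀ x : ℝ, 0 < x → x < ρ → 0 < ∑' n, y n * x ^ n := by
    intro x h1 h2
    rw [heq x h1 h2]
    positivity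
  -- key inequality : Ψ(S q) - Ψ(S p) ≤ log (S q) - log (S p) for 0 < p < q < ρ
  have hkey : ∀ p q : ℝ, 0 < p → p < q → q < ρ →
      (1 + (∑' n, y n * q ^ n)
          - Real.sqrt (1 - 6 * (∑' n, y n * q ^ n) + (∑' n, y n * q ^ n) ^ 2)) / 8
        - (1 + (∑' n, y n * p ^ n)
          - Real.sqrt (1 - 6 * (∑' n, y n * p ^ n) + (∑' n, y n * p ^ n) ^ 2)) / 8
      ≤ Real.log (∑' n, y n * q ^ n) - Real.log (∑' n, y n * p ^ n) := by
    intro p q hp hpq hq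
    have hpρ : p < ρ := lt_trans hpq hq
    have hq0 : 0 < q := lt_trans hp hpq
    have hlp : Real.log (∑' n, y n * p ^ n)
        = Real.log p
          + ((1 + (∑' n, y n * p ^ n)
              - Real.sqrt (1 - 6 * (∑' n, y n * p ^ n) + (∑' n, y n * p ^ n) ^ 2)) / 8
            + ∑' n, a n * p ^ n) := by
      conv_lhs => rw [heq p hp hpρ]
      rw [Real.log_mul (ne_of_gt hp) (Real.exp_ne_zero _), Real.log_exp]
    have hlq : Real.log (∑' n, y n * q ^ n)
        = Real.log q
          + ((1 + (∑' n, y n * q ^ n)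
              - Real.sqrt (1 - 6 * (∑' n, y n * q ^ n) + (∑' n, y n * q ^ n) ^ 2)) / 8
            + ∑' n, a n * q ^ n) := by
      conv_lhs => rw [heq q hq0 hq]
      rw [Real.log_mul (ne_of_gt hq0) (Real.exp_ne_zero _), Real.log_exp]
    have hlpq : Real.log p ≤ Real.log q := Real.log_le_log hp hpq.le
    have hApq : (∑' n, a n * p ^ n) ≤ ∑' n, a n * q ^ n :=
      hAmono p q hp.le hpq.le hq
    rw [hlp, hlq]
    linarith
  -- find x2 with 0 < x2 < ρ and v₀ < S x2
  obtain ⟨x2, hx2v, hx2pos, hx2ρ⟩ :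
      ∃ x2 : ℝ, v₀ < (∑' n, y n * x2 ^ n) ∧ 0 < x2 ∧ x2 < ρ := by
    have h1 : ∀ᶠ x in nhdsWithin ρ (Set.Iio ρ), v₀ < (∑' n, y n * x ^ n) :=
      hτ.eventually (eventually_gt_nhds hv₀τ)
    have h2 : ∀ᶠ x in nhdsWithin ρ (Set.Iio ρ), 0 < x ∧ x < ρ := by
      filter_upwards [Ioo_mem_nhdsLT_of_mem (⟨hρ0, le_refl ρ⟩ : ρ ∈ Set.Ioc 0 ρ)] with t ht
      exact ⟨ht.1, ht.2⟩
    obtain ⟨x2, hx2, hx2'⟩ := (h1.and h2).exists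
    exact ⟨x2, hx2, hx2'.1, hx2'.2⟩
  -- bound : S x ≤ C * x for 0 < x ≤ x2
  set C : ℝ := Real.exp ((1 + τ) / 8 + ∑' n, a n * x2 ^ n) with hC
  clear_value C
  have hCpos : 0 < C := hC ▸ Real.exp_pos _
  have hbound : ∀ x : ℝ, 0 < x → x ≤ x2 → (∑' n, y n * x ^ n) ≤ C * x := by
    intro x hx hxx2
    have hxρ : x < ρ := lt_of_le_of_lt hxx2 hx2ρ
    have h1 : (∑' n, y n * x ^ n) ≤ τ := hSle x hx.le hxρ
    have h2 : (∑' n, a n * x ^ n) ≤ ∑' n, a n * x2 ^ n := hAmono x x2 hx.le hxx2 hx2ρ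
    have h3 : 0 ≤ Real.sqrt (1 - 6 * (∑' n, y n * x ^ n) + (∑' n, y n * x ^ n) ^ 2) :=
      Real.sqrt_nonneg _
    calc (∑' n, y n * x ^ n)
        = x * Real.exp
          ((1 + (∑' n, y n * x ^ n)
              - Real.sqrt (1 - 6 * (∑' n, y n * x ^ n) + (∑' n, y n * x ^ n) ^ 2)) / 8
            + ∑' n, a n * x ^ n) := heq x hx hxρ
      _ ≤ x * C := by
          refine mul_le_mul_of_nonneg_left ?_ hx.le
          rw [hC]
          exact Real.exp_le_exp.2 (by linarith)
      _ = C * x := mul_comm x C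
  -- choose x1 small
  set x1 : ℝ := min (x2 / 2) (u₀ / (2 * C)) with hx1
  clear_value x1
  have hx1pos : 0 < x1 := hx1 ▸ lt_min (by linarith) (by positivity)
  have hx1x2 : x1 < x2 := by rw [hx1]; exact lt_of_le_of_lt (min_le_left _ _) (by linarith)
  have hSx1 : (∑' n, y n * x1 ^ n) < u₀ := by
    have h1 : (∑' n, y n * x1 ^ n) ≤ C * x1 := hbound x1 hx1pos hx1x2.le
    have h2 : x1 ≤ u₀ / (2 * C) := hx1 ▸ min_le_right _ _
    have h3 : C * x1 ≤ C * (u₀ / (2 * C)) := mul_le_mul_of_nonneg_left h2 hCpos.le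
    have h4 : C * (u₀ / (2 * C)) = u₀ / 2 := by field_simp
    have h5 : (∑' n, y n * x1 ^ n) ≤ u₀ / 2 := by rw [← h4]; exact le_trans h1 h3
    linarith
  -- continuity and IVT
  have hcont : ContinuousOn (fun x : ℝ => ∑' n, y n * x ^ n) (Set.Icc x1 x2) := by
    refine (tsum_cont_aux y hx2pos.le hx2ρ hconv).mono ?_
    intro t ht
    exact ⟨by linarith [ht.1], ht.2⟩
  have hIVT := intermediate_value_Icc hx1x2.le hcont
  obtain ⟨p, hpmem, hSp₀⟩ := hIVT ⟨hSx1.le, by linarith⟩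
  obtain ⟨q, hqmem, hSq₀⟩ := hIVT ⟨by linarith, hx2v.le⟩
  have hSp : (∑' n, y n * p ^ n) = u₀ := hSp₀
  have hSq : (∑' n, y n * q ^ n) = v₀ := hSq₀
  -- hSp : S p = u₀, hSq : S q = v₀
  have hppos : 0 < p := lt_of_lt_of_le hx1pos hpmem.1
  have hqρ : q < ρ := lt_of_le_of_lt hqmem.2 hx2ρ
  have hpρ : p < ρ := lt_of_le_of_lt hpmem.2 hx2ρ
  have hpq : p < q := by
    by_contra hge
    push_neg at hge
    have := hSmono q p (lt_of_lt_of_le hx1pos hqmem.1).le hge hpρ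
    rw [hSp, hSq] at this
    linarith
  have := hkey p q hppos hpq hqρ
  rw [hSp, hSq] at this
  exact numeric_contra u₀ v₀ hu₀ hv₀ this
end
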